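/- arXiv:2002.09767 — 2 statements merged into one kernel-verified Lean document; each statement's English description precedes it below -/
import Mathlib

section
/- Let s ∈ ℂ with Re(s) > 0 and let α > 0. Let (λ_n)_{n ∈ ℕ} be real numbers with λ_n ≥ 1 for all n and such that for every T ∈ ℝ the set {n : λ_n < T} is finite, and let (a_n)_{n ∈ ℕ} be complex numbers. Set ψ(T) = ∑_{n : λ_n < T} a_n·λ_n, and suppose ψ(T) = (e^{sT}/s)·(1 + O(e^{−αT})) as T → ∞. Then ∑_{n : λ_n < T} a_n = (e^{sT}/(sT))·(1 + O(1/T)) as T → ∞. -/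
/-!
Abel summation with weight `1/λ` writes the unweighted sum through the weighted one `ψ`:
`∑_{λₙ < T} aₙ = ψ(T)/T + ∫₁ᵀ ψ(u)/u² du`. With `σ = Re s`, the first term is
`e^{sT}/(sT) + O(e^{σT} e^{-αT}/T)` and `e^{-αT} = O(1/T)`. For the integral, `ψ(u) = O(e^{σu})`
on all of `[1, ∞)` (the sums are finite), and `∫₁ᵀ e^{σu}/u² du = O(e^{σT}/T²)`: on `[T/2, T]`
the factor `1/u²` is at most `4/T²`, while `[1, T/2]` contributes only `O(T e^{σT/2})`.
-/

open Real Filter Asymptotics MeasureTheory Set Interval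

theorem intervalIntegral.integral_indicator_Ioi {E : Type*} [NormedAddCommGroup E]
    [NormedSpace ℝ E] {a b c : ℝ} (hac : a ≤ c) (hcb : c ≤ b) (f : ℝ → E) :
    ∫ u in a..b, (Ioi c).indicator f u = ∫ u in c..b, f u := by
  rw [intervalIntegral.integral_of_le (hac.trans hcb), intervalIntegral.integral_of_le hcb,
    setIntegral_indicator measurableSet_Ioi, Ioc_inter_Ioi, sup_eq_right.mpr hac]

theorem integral_inv_sq {a b : ℝ} (ha : 0 < a) (hab : a ≤ b) :
    ∫ u in a..b, (u ^ 2)⁻¹ = a⁻¹ - b⁻¹ := by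
  have h := integral_zpow (a := a) (b := b) (n := -2)
    (Or.inr ⟨by norm_num, notMem_uIcc_of_lt ha (ha.trans_le hab)⟩)
  simp only [Int.reduceNeg, Int.reduceAdd, zpow_neg, zpow_ofNat, pow_one, Int.cast_neg] at h
  rw [h]
  ring

section ExpDivSq

variable {σ : ℝ}

theorem intervalIntegrable_exp_mul_div_sq {a b : ℝ} (ha : 0 < a) (hab : a ≤ b) :
    IntervalIntegrable (fun u ↦ exp (σ * u) / u ^ 2) volume a b := by
  refine ContinuousOn.intervalIntegrable fun u hu ↦ ?_
  have : u ≠ 0 := (ha.trans_le (uIcc_of_le hab ▸ hu).1).ne'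
  fun_prop (disch := positivity)

theorem integral_exp_mul_div_sq_le (hσ : 0 < σ) {T : ℝ} (hT : 2 ≤ T) :
    ∫ u in (1 : ℝ)..T, exp (σ * u) / u ^ 2 ≤
      T * exp (σ * (T / 2)) + 4 / σ * (exp (σ * T) / T ^ 2) := by
  rw [← intervalIntegral.integral_add_adjacent_intervals
    (intervalIntegrable_exp_mul_div_sq one_pos (by linarith : (1 : ℝ) ≤ T / 2))
    (intervalIntegrable_exp_mul_div_sq (by linarith) (by linarith : T / 2 ≤ T))]
  gcongr
  · have hbound : ∀ u ∈ Ι (1 : ℝ) (T / 2), ‖exp (σ * u) / u ^ 2‖ ≤ exp (σ * (T / 2)) := by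
      intro u hu
      rw [uIoc_of_le (by linarith)] at hu
      rw [norm_of_nonneg (by positivity)]
      calc exp (σ * u) / u ^ 2 ≤ exp (σ * u) := div_le_self (exp_nonneg _) (one_le_pow₀ hu.1.le)
        _ ≤ exp (σ * (T / 2)) := exp_le_exp.2 (by gcongr; exact hu.2)
    calc _ ≤ ‖∫ u in (1 : ℝ)..T / 2, exp (σ * u) / u ^ 2‖ := le_norm_self _
      _ ≤ exp (σ * (T / 2)) * |T / 2 - 1| :=
        intervalIntegral.norm_integral_le_of_norm_le_const hbound
      _ ≤ T * exp (σ * (T / 2)) := by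
        rw [abs_of_nonneg (by linarith), mul_comm]
        gcongr
        linarith
  · have hbound : ∀ u ∈ Icc (T / 2) T, exp (σ * u) / u ^ 2 ≤ 4 / T ^ 2 * exp (σ * u) := by
      intro u hu
      rw [div_eq_inv_mul, show 4 / T ^ 2 = ((T / 2) ^ 2)⁻¹ by ring]
      gcongr
      exact hu.1
    calc _ ≤ ∫ u in T / 2..T, 4 / T ^ 2 * exp (σ * u) :=
          intervalIntegral.integral_mono_on (by linarith)
            (intervalIntegrable_exp_mul_div_sq (by linarith) (by linarith))
            ((by fun_prop : Continuous fun u ↦ 4 / T ^ 2 * exp (σ * u)).intervalIntegrable _ _)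
            hbound
      _ = 4 / σ * ((exp (σ * T) - exp (σ * (T / 2))) / T ^ 2) := by
        rw [intervalIntegral.integral_const_mul,
          intervalIntegral.integral_comp_mul_left exp hσ.ne', integral_exp, smul_eq_mul]
        ring
      _ ≤ 4 / σ * (exp (σ * T) / T ^ 2) := by
        gcongr
        exact sub_le_self _ (exp_pos _).le

theorem isBigO_integral_exp_mul_div_sq (hσ : 0 < σ) :
    (fun T ↦ ∫ u in (1 : ℝ)..T, exp (σ * u) / u ^ 2) =O[atTop]
      fun T ↦ exp (σ * T) / T ^ 2 := by
  have hpow : ∀ᶠ T in atTop, T ^ 3 ≤ exp (σ / 2 * T) := by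
    filter_upwards [(isLittleO_pow_exp_pos_mul_atTop 3 (half_pos hσ)).bound one_pos,
      eventually_ge_atTop 0] with T hT hT0
    simpa [abs_of_nonneg hT0] using hT
  refine IsBigO.of_bound (1 + 4 / σ) ?_
  filter_upwards [hpow, eventually_ge_atTop 2] with T hT3 hT2
  have hhalf : T * exp (σ * (T / 2)) ≤ exp (σ * T) / T ^ 2 := by
    rw [le_div_iff₀ (by positivity)]
    calc T * exp (σ * (T / 2)) * T ^ 2 = T ^ 3 * exp (σ * (T / 2)) := by ring
      _ ≤ exp (σ / 2 * T) * exp (σ * (T / 2)) := by gcongr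
      _ = exp (σ * T) := by rw [← exp_add]; ring_nf
  rw [norm_of_nonneg (intervalIntegral.integral_nonneg (by linarith) fun u _ ↦ by positivity),
    norm_of_nonneg (by positivity)]
  linarith [integral_exp_mul_div_sq_le hσ hT2]

theorem exists_norm_le_mul_exp_of_isBigO {E : Type*} [SeminormedAddCommGroup E] {f : ℝ → E}
    (hσ : 0 ≤ σ) (hbdd : ∀ T, ∃ B, ∀ u ≤ T, ‖f u‖ ≤ B)
    (hf : f =O[atTop] fun u ↦ exp (σ * u)) :
    ∃ K, ∀ u, 0 ≤ u → ‖f u‖ ≤ K * exp (σ * u) := by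
  obtain ⟨c, hc⟩ := hf.bound
  obtain ⟨T₀, hT₀⟩ := eventually_atTop.1 hc
  obtain ⟨B, hB⟩ := hbdd T₀
  refine ⟨max c 0 + max B 0, fun u hu ↦ ?_⟩
  have hexp : 1 ≤ exp (σ * u) := one_le_exp (mul_nonneg hσ hu)
  rcases le_total u T₀ with h | h
  · calc ‖f u‖ ≤ max B 0 := (hB u h).trans (le_max_left B 0)
      _ ≤ max B 0 * exp (σ * u) := le_mul_of_one_le_right (le_max_right B 0) hexp
      _ ≤ (max c 0 + max B 0) * exp (σ * u) := by
        gcongr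
        exact le_add_of_nonneg_left (le_max_right c 0)
  · calc ‖f u‖ ≤ c * exp (σ * u) := by simpa using hT₀ u h
      _ ≤ max c 0 * exp (σ * u) := by gcongr; exact le_max_left c 0
      _ ≤ (max c 0 + max B 0) * exp (σ * u) := by
        gcongr
        exact le_add_of_nonneg_right (le_max_right B 0)

theorem isBigO_integral_inv_sq_smul {E : Type*} [NormedAddCommGroup E] [NormedSpace ℝ E]
    {f : ℝ → E} {K : ℝ} (hσ : 0 < σ) (hf : ∀ u, 0 ≤ u → ‖f u‖ ≤ K * exp (σ * u)) :
    (fun T ↦ ∫ u in (1 : ℝ)..T, (u ^ 2)⁻¹ • f u) =O[atTop] fun T ↦ exp (σ * T) / T ^ 2 := by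
  refine IsBigO.trans ?_ (isBigO_integral_exp_mul_div_sq hσ)
  refine IsBigO.of_bound |K| ?_
  filter_upwards [eventually_ge_atTop 1] with T hT
  calc ‖∫ u in (1 : ℝ)..T, (u ^ 2)⁻¹ • f u‖
      ≤ ∫ u in (1 : ℝ)..T, K * (exp (σ * u) / u ^ 2) := by
        refine intervalIntegral.norm_integral_le_of_norm_le hT (ae_of_all _ fun u hu ↦ ?_)
          ((intervalIntegrable_exp_mul_div_sq one_pos hT).const_mul K)
        have hu0 : 0 < u := one_pos.trans hu.1
        rw [norm_smul, norm_inv, norm_pow, norm_of_nonneg hu0.le, mul_div_assoc', div_eq_inv_mul]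
        exact mul_le_mul_of_nonneg_left (hf u hu0.le) (by positivity)
    _ = K * ∫ u in (1 : ℝ)..T, exp (σ * u) / u ^ 2 := intervalIntegral.integral_const_mul _ _
    _ ≤ |K| * ‖∫ u in (1 : ℝ)..T, exp (σ * u) / u ^ 2‖ := (le_abs_self _).trans_eq (abs_mul _ _)

end ExpDivSq

noncomputable def partialSum {ι E : Type*} [AddCommMonoid E] (l : ι → ℝ) (c : ι → E) (T : ℝ) :
    E :=
  ∑ᶠ n ∈ {n | l n < T}, c n

section PartialSum

variable {ι E : Type*} {l : ι → ℝ} {T u : ℝ}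

theorem partialSum_eq_sum_indicator [AddCommMonoid E] (c : ι → E)
    (hfin : {n | l n < T}.Finite) (hu : u ≤ T) :
    partialSum l c u = ∑ n ∈ hfin.toFinset, (Ioi (l n)).indicator (fun _ ↦ c n) u := by
  have hsupp : Function.support ({n | l n < u}.indicator c) ⊆ hfin.toFinset := fun n hn ↦ by
    rw [support_indicator] at hn
    simpa using hn.1.trans_le hu
  rw [partialSum, finsum_mem_def, finsum_eq_sum_of_support_subset _ hsupp]
  simp only [indicator_apply, mem_ofPred_eq, mem_Ioi]

theorem norm_partialSum_le [SeminormedAddCommGroup E] (c : ι → E)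
    (hfin : {n | l n < T}.Finite) (hu : u ≤ T) :
    ‖partialSum l c u‖ ≤ ∑ n ∈ hfin.toFinset, ‖c n‖ := by
  rw [partialSum_eq_sum_indicator c hfin hu]
  exact (norm_sum_le _ _).trans (Finset.sum_le_sum fun n _ ↦ norm_indicator_le_norm_self _ _)

variable [NormedAddCommGroup E] [NormedSpace ℝ E] [CompleteSpace E]

theorem integral_inv_sq_smul_partialSum (c : ι → E) {x₀ : ℝ} (hx₀ : 0 < x₀)
    (hl : ∀ n, x₀ ≤ l n) (hT : x₀ ≤ T) (hfin : {n | l n < T}.Finite) :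
    ∫ u in x₀..T, (u ^ 2)⁻¹ • partialSum l c u = ∑ n ∈ hfin.toFinset, ((l n)⁻¹ - T⁻¹) • c n := by
  have hcont : ContinuousOn (fun u : ℝ ↦ (u ^ 2)⁻¹) (uIcc x₀ T) := fun u hu ↦ by
    have : u ≠ 0 := (hx₀.trans_le (uIcc_of_le hT ▸ hu).1).ne'
    fun_prop (disch := positivity)
  have hint : ∀ n, IntervalIntegrable (fun u ↦ (Ioi (l n)).indicator (fun u : ℝ ↦ (u ^ 2)⁻¹) u)
      volume x₀ T := fun n ↦
    ⟨hcont.intervalIntegrable.1.indicator measurableSet_Ioi,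
      hcont.intervalIntegrable.2.indicator measurableSet_Ioi⟩
  have hsplit : EqOn (fun u ↦ (u ^ 2)⁻¹ • partialSum l c u)
      (fun u ↦ ∑ n ∈ hfin.toFinset, (Ioi (l n)).indicator (fun u : ℝ ↦ (u ^ 2)⁻¹) u • c n)
      (uIcc x₀ T) := fun u hu ↦ by
    simp only [partialSum_eq_sum_indicator c hfin (uIcc_of_le hT ▸ hu).2, Finset.smul_sum]
    refine Finset.sum_congr rfl fun n _ ↦ ?_
    by_cases h : u ∈ Ioi (l n) <;> simp [h]
  rw [intervalIntegral.integral_congr hsplit, intervalIntegral.integral_finsetSum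
    fun n _ ↦ (hint n).smul_continuousOn continuousOn_const]
  refine Finset.sum_congr rfl fun n hn ↦ ?_
  have hlT : l n < T := by simpa using hn
  rw [intervalIntegral.integral_smul_const, intervalIntegral.integral_indicator_Ioi (hl n) hlT.le,
    integral_inv_sq (hx₀.trans_le (hl n)) hlT.le]

theorem partialSum_eq_smul_add_integral (a : ι → E) {x₀ : ℝ} (hx₀ : 0 < x₀)
    (hl : ∀ n, x₀ ≤ l n) (hT : x₀ ≤ T) (hfin : {n | l n < T}.Finite) :
    partialSum l a T = T⁻¹ • partialSum l (fun n ↦ l n • a n) T +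
      ∫ u in x₀..T, (u ^ 2)⁻¹ • partialSum l (fun n ↦ l n • a n) u := by
  rw [integral_inv_sq_smul_partialSum _ hx₀ hl hT hfin, partialSum_eq_sum_indicator _ hfin le_rfl,
    partialSum_eq_sum_indicator _ hfin le_rfl, Finset.smul_sum, ← Finset.sum_add_distrib]
  refine Finset.sum_congr rfl fun n hn ↦ ?_
  have hT' : T ∈ Ioi (l n) := by simpa using hn
  have hl0 : l n ≠ 0 := (hx₀.trans_le (hl n)).ne'
  rw [indicator_of_mem hT', indicator_of_mem hT', smul_smul, smul_smul, ← add_smul,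
    show T⁻¹ * l n + ((l n)⁻¹ - T⁻¹) * l n = 1 by field_simp; ring, one_smul]

theorem isBigO_partialSum_sub_smul {a : ι → E} {M : ℝ → E} {σ : ℝ} (hσ : 0 < σ)
    (hl : ∀ n, 1 ≤ l n) (hfin : ∀ T, {n | l n < T}.Finite)
    (hM : M =O[atTop] fun T ↦ exp (σ * T))
    (hψ : (fun T ↦ partialSum l (fun n ↦ l n • a n) T - M T) =O[atTop]
      fun T ↦ exp (σ * T) * T⁻¹) :
    (fun T ↦ partialSum l a T - T⁻¹ • M T) =O[atTop] fun T ↦ exp (σ * T) / T ^ 2 := by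
  set ψ := partialSum l fun n ↦ l n • a n
  have hgrowth : ψ =O[atTop] fun T ↦ exp (σ * T) := by
    have h : (fun T ↦ ψ T - M T) =O[atTop] fun T ↦ exp (σ * T) := by
      simpa using hψ.trans ((isBigO_refl _ _).mul (tendsto_inv_atTop_zero.isBigO_one ℝ))
    simpa using h.add hM
  obtain ⟨K, hK⟩ := exists_norm_le_mul_exp_of_isBigO hσ.le
    (fun T ↦ ⟨_, fun u hu ↦ norm_partialSum_le _ (hfin T) hu⟩) hgrowth
  have hfirst : (fun T ↦ T⁻¹ • (ψ T - M T)) =O[atTop] fun T ↦ exp (σ * T) / T ^ 2 :=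
    ((isBigO_refl (fun T : ℝ ↦ T⁻¹) _).smul hψ).congr_right fun T ↦ by
      rw [smul_eq_mul]
      ring
  refine (hfirst.add (isBigO_integral_inv_sq_smul hσ hK)).congr' ?_ EventuallyEq.rfl
  filter_upwards [eventually_ge_atTop 1] with T hT
  rw [partialSum_eq_smul_add_integral a one_pos hl hT (hfin T), smul_sub]
  abel

end PartialSum

theorem Asymptotics.isBigO_atTop_of_norm_le_mul {E : Type*} [SeminormedAddCommGroup E]
    {f : ℝ → E} {g : ℝ → ℝ} {C T₀ : ℝ} (h : ∀ T, T₀ ≤ T → ‖f T‖ ≤ C * g T) :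
    f =O[atTop] g :=
  IsBigO.of_bound |C| (eventually_atTop.2 ⟨T₀, fun T hT ↦
    (h T hT).trans ((le_abs_self _).trans_eq (by rw [abs_mul, norm_eq_abs]))⟩)

theorem Asymptotics.IsBigO.exists_pos_forall_norm_le {E : Type*} [SeminormedAddCommGroup E]
    {f : ℝ → E} {g : ℝ → ℝ} (h : f =O[atTop] g) (hg : ∀ᶠ T in atTop, 0 ≤ g T) :
    ∃ C, 0 < C ∧ ∃ T₀, ∀ T, T₀ ≤ T → ‖f T‖ ≤ C * g T := by
  obtain ⟨C, hC, hbound⟩ := isBigO_iff'.1 h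
  obtain ⟨T₀, hT₀⟩ := eventually_atTop.1 (hbound.and hg)
  exact ⟨C, hC, T₀, fun T hT ↦ (hT₀ T hT).1.trans_eq (by rw [norm_of_nonneg (hT₀ T hT).2])⟩

theorem isBigO_exp_neg_mul_inv {α : ℝ} (hα : 0 < α) :
    (fun T ↦ exp (-α * T)) =O[atTop] fun T ↦ T⁻¹ := by
  simpa [rpow_neg_one] using (isLittleO_exp_neg_mul_rpow_atTop hα (-1)).isBigO

theorem norm_cexp_mul_ofReal_div (s z : ℂ) (T : ℝ) :
    ‖Complex.exp (s * T) / z‖ = exp (s.re * T) / ‖z‖ := by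
  simp [Complex.norm_exp]

theorem isBigO_cexp_mul_ofReal_div (s z : ℂ) :
    (fun T : ℝ ↦ Complex.exp (s * T) / z) =O[atTop] fun T ↦ exp (s.re * T) :=
  IsBigO.of_bound ‖z‖⁻¹ (Eventually.of_forall fun T ↦ by
    rw [norm_cexp_mul_ofReal_div, norm_of_nonneg (exp_nonneg _), div_eq_inv_mul])

theorem isBigO_exp_mul_div_sq_norm_cexp {s : ℂ} (hs : s ≠ 0) :
    (fun T ↦ exp (s.re * T) / T ^ 2) =O[atTop]
      fun T ↦ ‖Complex.exp (s * T) / (s * T)‖ * (1 / T) := by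
  refine IsBigO.of_bound ‖s‖ ?_
  filter_upwards [eventually_gt_atTop 0] with T hT
  have hs' : ‖s‖ ≠ 0 := norm_ne_zero_iff.2 hs
  rw [norm_of_nonneg (by positivity), norm_of_nonneg (by positivity), norm_cexp_mul_ofReal_div,
    norm_mul, Complex.norm_real, norm_of_nonneg hT.le]
  apply le_of_eq
  field_simp

/-- Partial summation (Lemma 6.3): from
`∑_{λₙ < T} aₙ·λₙ = (e^{sT}/s)(1 + O(e^{−αT}))` deduce
`∑_{λₙ < T} aₙ = (e^{sT}/(sT))(1 + O(1/T))`. -/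
theorem sum_eq_of_weighted_sum_asymp
    (s : ℂ) (hs : 0 < s.re) (α : ℝ) (hα : 0 < α)
    (l : ℕ → ℝ) (hl : ∀ n, 1 ≤ l n)
    (hfin : ∀ T : ℝ, {n : ℕ | l n < T}.Finite)
    (a : ℕ → ℂ)
    (hψ : ∃ C : ℝ, 0 < C ∧ ∃ T₀ : ℝ, ∀ T : ℝ, T₀ ≤ T →
      ‖((∑ᶠ n ∈ {n : ℕ | l n < T}, a n * (l n : ℂ)) -
          Complex.exp (s * T) / s)‖
        ≤ C * ‖(Complex.exp (s * T) / s)‖ * Real.exp (-α * T)) :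
    ∃ C : ℝ, 0 < C ∧ ∃ T₀ : ℝ, ∀ T : ℝ, T₀ ≤ T →
      ‖((∑ᶠ n ∈ {n : ℕ | l n < T}, a n) -
          Complex.exp (s * T) / (s * T))‖
        ≤ C * ‖(Complex.exp (s * T) / (s * T))‖ * (1 / T) := by
  obtain ⟨C, -, T₀, hC⟩ := hψ
  have hs0 : s ≠ 0 := fun h ↦ by simp [h] at hs
  have hrem : (fun T ↦ partialSum l (fun n ↦ l n • a n) T - Complex.exp (s * T) / s) =O[atTop]
      fun T ↦ ‖Complex.exp (s * T) / s‖ * exp (-α * T) :=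
    isBigO_atTop_of_norm_le_mul fun T hT ↦ by
      simpa [partialSum, Complex.real_smul, mul_comm, mul_assoc] using hC T hT
  have hM := isBigO_cexp_mul_ofReal_div s s
  have hmain := isBigO_partialSum_sub_smul hs hl hfin hM
    (hrem.trans (hM.norm_left.mul (isBigO_exp_neg_mul_inv hα)))
  obtain ⟨c, hc, T₁, hT₁⟩ := IsBigO.exists_pos_forall_norm_le
    (hmain.trans (isBigO_exp_mul_div_sq_norm_cexp hs0))
    ((eventually_ge_atTop 0).mono fun T hT ↦ by positivity)
  have hsmul (T : ℝ) : T⁻¹ • (Complex.exp (s * T) / s) = Complex.exp (s * T) / (s * T) := by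
    rw [Complex.real_smul]
    push_cast
    field_simp
  refine ⟨c, hc, T₁, fun T hT ↦ ?_⟩
  rw [mul_assoc]
  simpa only [hsmul, partialSum] using hT₁ T hT
end

section
/- Let h > 0 and h′ < h, and let N : [2,∞) → ℝ be a nondecreasing function with N(T) = li(e^{hT}) + O(e^{h′T}) as T → ∞. Then for every α with 0 < α < h − h′ one has N(T + e^{−αT}) − N(T − e^{−αT}) = O(e^{(h−α)T}) as T → ∞. -/
/-!
With `ε = e^{-αT}`, monotonicity of `N` and the asymptotic at `T ± ε` sandwich the increment
`N(T + ε) - N(T - ε)` by the increment of `li ∘ exp (h ·)` over `[T - ε, T + ε]` plus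
`C e^{h'(T + ε)} + C e^{h'(T - ε)}`. Since `li' = 1 / log ≤ 1` beyond `e`, the main increment is
at most `e^{h(T + ε)} - e^{h(T - ε)} ≤ 2hε e^{hε} e^{hT} ≤ 2h e^h e^{(h - α)T}`, and the error
terms are `O(e^{(h - α)T})` because `h' < h - α`.
-/

/-- The logarithmic integral `li x = ∫_2^x dt / log t`. -/
noncomputable def li (x : ℝ) : ℝ := ∫ t in (2 : ℝ)..x, 1 / Real.log t

open Real Set

lemma intervalIntegrable_one_div_log {u v : ℝ} (hu : 1 < u) (hv : 1 < v) :
    IntervalIntegrable (fun t => 1 / log t) MeasureTheory.volume u v := by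
  have hgt : ∀ t ∈ uIcc u v, 1 < t := fun t ht => (lt_min hu hv).trans_le ht.1
  refine ContinuousOn.intervalIntegrable <|
    continuousOn_const.div (continuousOn_log.mono fun t ht => ?_) fun t ht => ?_
  · exact (zero_lt_one.trans (hgt t ht)).ne'
  · exact (log_pos (hgt t ht)).ne'

lemma li_sub_li_le {a b : ℝ} (ha : 1 < a) (hab : a ≤ b) :
    li b - li a ≤ (b - a) / log a := by
  have hint := intervalIntegrable_one_div_log ha (ha.trans_le hab)
  rw [li, li, intervalIntegral.integral_interval_sub_left
    (intervalIntegrable_one_div_log one_lt_two (ha.trans_le hab))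
    (intervalIntegrable_one_div_log one_lt_two ha)]
  calc (∫ t in a..b, 1 / log t) ≤ ∫ _ in a..b, 1 / log a :=
        intervalIntegral.integral_mono_on hab hint intervalIntegrable_const fun t ht =>
          one_div_le_one_div_of_le (log_pos ha) (log_le_log (by linarith) ht.1)
    _ = (b - a) / log a := by rw [intervalIntegral.integral_const, smul_eq_mul, mul_one_div]

lemma exp_sub_exp_le_mul_exp (x y : ℝ) : exp y - exp x ≤ (y - x) * exp y := by
  have h := mul_le_mul_of_nonneg_right (add_one_le_exp (x - y)) (exp_pos y).le
  rw [← exp_add, sub_add_cancel] at h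
  linarith

lemma exp_mul_add_sub_exp_mul_sub_le {h ε : ℝ} (hh : 0 ≤ h) (hε₀ : 0 ≤ ε) (hε₁ : ε ≤ 1) (T : ℝ) :
    exp (h * (T + ε)) - exp (h * (T - ε)) ≤ 2 * h * exp h * (ε * exp (h * T)) := by
  calc exp (h * (T + ε)) - exp (h * (T - ε))
      ≤ (h * (T + ε) - h * (T - ε)) * exp (h * (T + ε)) := exp_sub_exp_le_mul_exp _ _
    _ = 2 * h * exp (h * ε) * (ε * exp (h * T)) := by rw [mul_add, exp_add]; ring
    _ ≤ 2 * h * exp h * (ε * exp (h * T)) := by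
      gcongr
      exact mul_le_of_le_one_right hh hε₁

lemma li_exp_mul_add_sub_li_exp_mul_sub_le {h ε T : ℝ} (hh : 0 ≤ h) (hε₀ : 0 ≤ ε) (hε₁ : ε ≤ 1)
    (hT : 1 ≤ h * (T - ε)) :
    li (exp (h * (T + ε))) - li (exp (h * (T - ε))) ≤ 2 * h * exp h * (ε * exp (h * T)) := by
  have hlog : 1 ≤ log (exp (h * (T - ε))) := by rwa [log_exp]
  calc li (exp (h * (T + ε))) - li (exp (h * (T - ε)))
      ≤ (exp (h * (T + ε)) - exp (h * (T - ε))) / log (exp (h * (T - ε))) :=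
        li_sub_li_le (one_lt_exp_iff.2 (by linarith)) (exp_le_exp.2 (by nlinarith))
    _ ≤ exp (h * (T + ε)) - exp (h * (T - ε)) :=
        div_le_self (sub_nonneg.2 (exp_le_exp.2 (by nlinarith))) hlog
    _ ≤ 2 * h * exp h * (ε * exp (h * T)) := exp_mul_add_sub_exp_mul_sub_le hh hε₀ hε₁ T

lemma exp_mul_add_le_exp_abs_mul_exp {a k T δ : ℝ} (hak : a ≤ k) (hT : 0 ≤ T) (hδ : |δ| ≤ 1) :
    exp (a * (T + δ)) ≤ exp |a| * exp (k * T) := by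
  rw [← exp_add, exp_le_exp]
  have : a * δ ≤ |a| :=
    (le_abs_self _).trans (by rw [abs_mul]; exact mul_le_of_le_one_right (abs_nonneg a) hδ)
  nlinarith

theorem counting_short_interval_bound_general
    (h h' : ℝ) (hh : 0 < h)
    (N : ℝ → ℝ) (hmono : ∀ x y : ℝ, 2 ≤ x → x ≤ y → N x ≤ N y)
    (hN : ∃ C : ℝ, 0 < C ∧ ∃ T₀ : ℝ, 2 ≤ T₀ ∧ ∀ T : ℝ, T₀ ≤ T →
      |N T - li (Real.exp (h * T))| ≤ C * Real.exp (h' * T)) :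
    ∀ α : ℝ, 0 < α → α < h - h' →
      ∃ C : ℝ, 0 < C ∧ ∃ T₀ : ℝ, 2 ≤ T₀ ∧ ∀ T : ℝ, T₀ ≤ T →
        |N (T + Real.exp (-α * T)) - N (T - Real.exp (-α * T))|
          ≤ C * Real.exp ((h - α) * T) := by
  obtain ⟨C, hC, T₁, hT₁, hN⟩ := hN
  intro α hα hαh
  refine ⟨2 * h * exp h + 2 * C * exp |h'|, by positivity, max (T₁ + 1) (1 / h + 1),
    le_max_of_le_left (by linarith), fun T hT => ?_⟩
  obtain ⟨hT₁T, hhT⟩ := max_le_iff.1 hT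
  set ε := exp (-α * T) with hε
  have hε₀ : 0 < ε := exp_pos _
  have hε₁ : ε ≤ 1 := exp_le_one_iff.2 (by nlinarith)
  have hhTε : 1 ≤ h * (T - ε) := by
    rw [← mul_one_div_cancel hh.ne']
    exact mul_le_mul_of_nonneg_left (by linarith) hh.le
  have herr (δ : ℝ) (hδ : |δ| ≤ 1) : exp (h' * (T + δ)) ≤ exp |h'| * exp ((h - α) * T) :=
    exp_mul_add_le_exp_abs_mul_exp (by linarith) (by linarith) hδ
  have hεT : ε * exp (h * T) = exp ((h - α) * T) := by rw [hε, ← exp_add]; ring_nf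
  rw [abs_of_nonneg (sub_nonneg.2 (hmono _ _ (by linarith) (by linarith)))]
  calc N (T + ε) - N (T - ε)
      ≤ (li (exp (h * (T + ε))) - li (exp (h * (T - ε))))
          + C * exp (h' * (T + ε)) + C * exp (h' * (T + -ε)) := by
        rw [← sub_eq_add_neg]
        linarith [abs_le.1 (hN (T + ε) (by linarith)), abs_le.1 (hN (T - ε) (by linarith))]
    _ ≤ 2 * h * exp h * (ε * exp (h * T)) + C * (exp |h'| * exp ((h - α) * T))
          + C * (exp |h'| * exp ((h - α) * T)) := by
        gcongr
        · exact li_exp_mul_add_sub_li_exp_mul_sub_le hh.le hε₀.le hε₁ hhTε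
        · exact herr ε (by rwa [abs_of_pos hε₀])
        · exact herr (-ε) (by rwa [abs_neg, abs_of_pos hε₀])
    _ = (2 * h * exp h + 2 * C * exp |h'|) * exp ((h - α) * T) := by rw [hεT]; ring

/-- If a nondecreasing counting function satisfies `N(T) = li(e^{hT}) + O(e^{h'T})`,
then `N(T + e^{−αT}) − N(T − e^{−αT}) = O(e^{(h−α)T})` for `0 < α < h − h'`. -/
theorem counting_short_interval_bound
    (h h' : ℝ) (hh : 0 < h) (hh' : h' < h)
    (N : ℝ → ℝ) (hmono : ∀ x y : ℝ, 2 ≤ x → x ≤ y → N x ≤ N y)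
    (hN : ∃ C : ℝ, 0 < C ∧ ∃ T₀ : ℝ, 2 ≤ T₀ ∧ ∀ T : ℝ, T₀ ≤ T →
      |N T - li (Real.exp (h * T))| ≤ C * Real.exp (h' * T)) :
    ∀ α : ℝ, 0 < α → α < h - h' →
      ∃ C : ℝ, 0 < C ∧ ∃ T₀ : ℝ, 2 ≤ T₀ ∧ ∀ T : ℝ, T₀ ≤ T →
        |N (T + Real.exp (-α * T)) - N (T - Real.exp (-α * T))|
          ≤ C * Real.exp ((h - α) * T) :=
  counting_short_interval_bound_general h h' hh N hmono hN
end
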